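/- Let α ∈ (0,1) be irrational and let n ≥ 1 have Ostrowski representation with lowest nonzero digit at index L = k_0(n). If L ≥ 2 (or L ≥ 1 in case α < 1/2), then ‖nα‖ < ‖q_{L−1}α‖. -/

import Mathlib

/-- Gauss-map iterates of `α`. -/
noncomputable def cfFrac (α : ℝ) : ℕ → ℝ
  | 0 => α
  | k + 1 => Int.fract (1 / cfFrac α k)

/-- Partial quotients of `α` (1-indexed, `cfA α 0 = 0` unused). -/
noncomputable def cfA (α : ℝ) : ℕ → ℕ
  | 0 => 0
  | k + 1 => (⌊1 / cfFrac α k⌋).toNat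

/-- Numerators of the convergents of `α`. -/
noncomputable def cfP (α : ℝ) : ℕ → ℕ
  | 0 => 0
  | 1 => 1
  | k + 2 => cfA α (k + 2) * cfP α (k + 1) + cfP α k

/-- Denominators of the convergents of `α`. -/
noncomputable def cfQ (α : ℝ) : ℕ → ℕ
  | 0 => 1
  | 1 => cfA α 1
  | k + 2 => cfA α (k + 2) * cfQ α (k + 1) + cfQ α k

/-- Distance from `x` to the nearest integer. -/
noncomputable def distNearInt (x : ℝ) : ℝ := min (Int.fract x) (1 - Int.fract x)

/-- `b` is the sequence of digits of an Ostrowski representation of `n` w.r.t. `α`: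
`n = Σ b_k q_k` with `0 ≤ b_0 ≤ a_1 - 1`, `0 ≤ b_k ≤ a_{k+1}` for `k ≥ 1`, and
`b_{k-1} = 0` whenever `b_k = a_{k+1}`. -/
def OstrowskiRep (α : ℝ) (n : ℕ) (b : ℕ → ℕ) : Prop :=
  b 0 ≤ cfA α 1 - 1 ∧
  (∀ k, 1 ≤ k → b k ≤ cfA α (k + 1)) ∧
  (∀ k, 1 ≤ k → b k = cfA α (k + 1) → b (k - 1) = 0) ∧
  ∃ N, (∀ k, N < k → b k = 0) ∧ n = ∑ k ∈ Finset.range (N + 1), b k * cfQ α k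

/-!
Write `θᵢ = cfFrac α i` and `e_k = θ₀ ⋯ θ_k`. Then `q_k α - p_k = (-1)^k e_k` and
`e_k = a_{k+2} e_{k+1} + e_{k+2}`, so `nα - Σ b_k p_k = Σ_{k ≥ L} (-1)^k b_k e_k`. Because
`b_k ≤ a_{k+1}`, the recurrence traps this finite alternating sum, after multiplying by `(-1)^L`,
strictly between `-e_L` and `e_{L-1}`; hence `‖nα‖ < e_{L-1}`. The condition on `L` gives
`e_{L-1} < 1/2` (via `e₀ = α` and `1 = a₁ e₀ + e₁`), so `e_{L-1} = ‖q_{L-1} α‖`.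
-/

open Finset

theorem irrational_cfFrac {α : ℝ} (hirr : Irrational α) (k : ℕ) : Irrational (cfFrac α k) := by
  induction k with
  | zero => exact hirr
  | succ k ih =>
    rw [cfFrac, Int.fract, one_div]
    exact ih.inv.sub_intCast _

theorem cfFrac_mem_Ioo {α : ℝ} (hα : α ∈ Set.Ioo (0 : ℝ) 1) (hirr : Irrational α) (k : ℕ) :
    cfFrac α k ∈ Set.Ioo (0 : ℝ) 1 := by
  cases k with
  | zero => exact hα
  | succ k =>
    refine ⟨(Int.fract_nonneg _).lt_of_ne fun h => ?_, Int.fract_lt_one _⟩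
    exact (irrational_cfFrac hirr (k + 1)).ne_zero h.symm

theorem cfA_succ_add_cfFrac_succ {α : ℝ} (hα : α ∈ Set.Ioo (0 : ℝ) 1) (hirr : Irrational α)
    (k : ℕ) : (cfA α (k + 1) : ℝ) + cfFrac α (k + 1) = (cfFrac α k)⁻¹ := by
  have hfloor : 0 ≤ ⌊1 / cfFrac α k⌋ :=
    Int.floor_nonneg.mpr (one_div_nonneg.mpr (cfFrac_mem_Ioo hα hirr k).1.le)
  have hcast : ((⌊1 / cfFrac α k⌋.toNat : ℕ) : ℝ) = ⌊1 / cfFrac α k⌋ := by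
    exact_mod_cast Int.toNat_of_nonneg hfloor
  rw [cfA, cfFrac, hcast, Int.floor_add_fract, one_div]

theorem one_le_cfA_succ {α : ℝ} (hα : α ∈ Set.Ioo (0 : ℝ) 1) (hirr : Irrational α) (k : ℕ) :
    1 ≤ cfA α (k + 1) := by
  obtain ⟨hθ0, hθ1⟩ := cfFrac_mem_Ioo hα hirr k
  have hinv : 1 < (cfFrac α k)⁻¹ := (one_lt_inv₀ hθ0).mpr hθ1
  have hpos : (0 : ℝ) < cfA α (k + 1) := by
    linarith [cfA_succ_add_cfFrac_succ hα hirr k, (cfFrac_mem_Ioo hα hirr (k + 1)).2]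
  exact Nat.cast_pos.mp hpos

/-- The error `|q_k α - p_k|`, by `cfQ_mul_sub_cfP`. -/
noncomputable def cfErr (α : ℝ) (k : ℕ) : ℝ := ∏ i ∈ range (k + 1), cfFrac α i

theorem cfErr_zero (α : ℝ) : cfErr α 0 = α := by simp [cfErr, cfFrac]

theorem cfErr_succ (α : ℝ) (k : ℕ) : cfErr α (k + 1) = cfErr α k * cfFrac α (k + 1) :=
  prod_range_succ _ _

theorem cfErr_pos {α : ℝ} (hα : α ∈ Set.Ioo (0 : ℝ) 1) (hirr : Irrational α) (k : ℕ) :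
    0 < cfErr α k :=
  prod_pos fun i _ => (cfFrac_mem_Ioo hα hirr i).1

theorem cfErr_succ_lt {α : ℝ} (hα : α ∈ Set.Ioo (0 : ℝ) 1) (hirr : Irrational α) (k : ℕ) :
    cfErr α (k + 1) < cfErr α k := by
  rw [cfErr_succ]
  exact mul_lt_of_lt_one_right (cfErr_pos hα hirr k) (cfFrac_mem_Ioo hα hirr (k + 1)).2

theorem cfErr_antitone {α : ℝ} (hα : α ∈ Set.Ioo (0 : ℝ) 1) (hirr : Irrational α) :
    Antitone (cfErr α) :=
  antitone_nat_of_succ_le fun k => (cfErr_succ_lt hα hirr k).le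

theorem cfA_one_mul_cfErr_zero_add {α : ℝ} (hα : α ∈ Set.Ioo (0 : ℝ) 1) (hirr : Irrational α) :
    cfA α 1 * cfErr α 0 + cfErr α 1 = 1 := by
  have h : (cfA α 1 + cfFrac α 1) * α = 1 := by
    rw [cfA_succ_add_cfFrac_succ hα hirr 0, cfFrac, inv_mul_cancel₀ hα.1.ne']
  rw [cfErr_succ, cfErr_zero]
  linear_combination h

theorem cfErr_eq_cfA_mul_add {α : ℝ} (hα : α ∈ Set.Ioo (0 : ℝ) 1) (hirr : Irrational α)
    (k : ℕ) : cfErr α k = cfA α (k + 2) * cfErr α (k + 1) + cfErr α (k + 2) := by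
  have h : (cfA α (k + 2) + cfFrac α (k + 2)) * cfFrac α (k + 1) = 1 := by
    rw [cfA_succ_add_cfFrac_succ hα hirr (k + 1),
      inv_mul_cancel₀ (cfFrac_mem_Ioo hα hirr (k + 1)).1.ne']
  rw [cfErr_succ, cfErr_succ, cfErr_succ]
  linear_combination -cfErr α k * h

theorem cfErr_one_lt_half {α : ℝ} (hα : α ∈ Set.Ioo (0 : ℝ) 1) (hirr : Irrational α) :
    cfErr α 1 < 1 / 2 := by
  have h := cfA_one_mul_cfErr_zero_add hα hirr
  have ha : (1 : ℝ) ≤ cfA α 1 := by exact_mod_cast one_le_cfA_succ hα hirr 0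
  nlinarith [cfErr_succ_lt hα hirr 0, cfErr_pos hα hirr 0]

theorem cfQ_mul_sub_cfP {α : ℝ} (hα : α ∈ Set.Ioo (0 : ℝ) 1) (hirr : Irrational α) (k : ℕ) :
    (cfQ α k : ℝ) * α - cfP α k = (-1) ^ k * cfErr α k := by
  induction k using Nat.twoStepInduction with
  | zero => simp [cfQ, cfP, cfErr_zero]
  | one =>
    have h := cfA_one_mul_cfErr_zero_add hα hirr
    rw [cfErr_zero] at h
    simp only [cfQ, cfP, Nat.cast_one]
    linear_combination h
  | more k ih₀ ih₁ =>
    simp only [cfQ, cfP, Nat.cast_add, Nat.cast_mul]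
    rw [cfErr_eq_cfA_mul_add hα hirr k] at ih₀
    linear_combination ih₀ + (cfA α (k + 2) : ℝ) * ih₁

theorem alternating_tail_mem_Ioo {a c e : ℕ → ℝ} (he : ∀ k, 0 < e k)
    (hrec : ∀ k, e k = a (k + 2) * e (k + 1) + e (k + 2)) (hc : ∀ k, 0 ≤ c k ∧ c k ≤ a (k + 1))
    (m d : ℕ) :
    ∑ k ∈ range d, (-1) ^ k * (c (m + 1 + k) * e (m + 1 + k)) ∈ Set.Ioo (-e (m + 1)) (e m) := by
  induction d generalizing m with
  | zero => simp [he]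
  | succ d ih =>
    obtain ⟨hlo, hhi⟩ := ih (m + 1)
    have hshift : ∑ k ∈ range d, (-1) ^ (k + 1) * (c (m + 1 + (k + 1)) * e (m + 1 + (k + 1))) =
        -∑ k ∈ range d, (-1) ^ k * (c (m + 1 + 1 + k) * e (m + 1 + 1 + k)) := by
      rw [← sum_neg_distrib]
      refine sum_congr rfl fun k _ => ?_
      rw [show m + 1 + (k + 1) = m + 1 + 1 + k by ring]
      ring
    rw [sum_range_succ', hshift]
    obtain ⟨hc0, hca⟩ := hc (m + 1)
    have hce : c (m + 1) * e (m + 1) ≤ a (m + 2) * e (m + 1) :=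
      mul_le_mul_of_nonneg_right hca (he _).le
    constructor
    · nlinarith [he (m + 1)]
    · linarith [hrec m]

theorem distNearInt_eq_abs_sub_round (x : ℝ) : distNearInt x = |x - round x| :=
  (abs_sub_round_eq_min x).symm

theorem distNearInt_le_abs_sub (x : ℝ) (z : ℤ) : distNearInt x ≤ |x - z| :=
  distNearInt_eq_abs_sub_round x ▸ round_le x z

theorem distNearInt_eq_abs_sub_of_lt {x : ℝ} {z : ℤ} (h : |x - z| < 1 / 2) :
    distNearInt x = |x - z| := by
  have hz : round x = z := round_eq_iff.mpr ⟨by linarith [neg_abs_le (x - z)], by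
    linarith [le_abs_self (x - z)]⟩
  rw [distNearInt_eq_abs_sub_round, hz]

theorem distNearInt_cfQ_mul {α : ℝ} (hα : α ∈ Set.Ioo (0 : ℝ) 1) (hirr : Irrational α) (k : ℕ)
    (hk : cfErr α k < 1 / 2) : distNearInt (cfQ α k * α) = cfErr α k := by
  have h := cfQ_mul_sub_cfP hα hirr k
  have habs : |(cfQ α k : ℝ) * α - ((cfP α k : ℤ) : ℝ)| = cfErr α k := by
    rw [Int.cast_natCast, h, abs_mul, abs_pow, abs_neg, abs_one, one_pow, one_mul,
      abs_of_pos (cfErr_pos hα hirr k)]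
  rw [← habs]
  exact distNearInt_eq_abs_sub_of_lt (habs ▸ hk)

theorem Finset.sum_range_eq_sum_range_add_of_eq_zero {M : Type*} [AddCommMonoid M] {f : ℕ → M}
    {L : ℕ} (hf : ∀ k < L, f k = 0) (n : ℕ) :
    ∑ k ∈ range n, f k = ∑ k ∈ range (n - L), f (L + k) := by
  rw [← sum_Ico_eq_sum_range]
  refine (sum_subset (fun k hk => ?_) fun k hk hkL => hf k ?_).symm
  · simp only [mem_Ico, mem_range] at hk ⊢; omega
  · simp only [mem_Ico, mem_range, not_and, not_lt] at hk hkL; omega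

theorem abs_sum_cfQ_mul_sub_sum_cfP_lt {α : ℝ} (hα : α ∈ Set.Ioo (0 : ℝ) 1)
    (hirr : Irrational α) {b : ℕ → ℕ} (hb : ∀ k, b k ≤ cfA α (k + 1)) {m : ℕ}
    (hb_low : ∀ k < m + 1, b k = 0) (N : ℕ) :
    |(∑ k ∈ range N, (b k * cfQ α k : ℝ)) * α - ∑ k ∈ range N, (b k * cfP α k : ℝ)| <
      cfErr α m := by
  have hterm (k : ℕ) :
      (b k * cfQ α k : ℝ) * α - b k * cfP α k = b k * ((-1) ^ k * cfErr α k) := by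
    rw [← cfQ_mul_sub_cfP hα hirr]; ring
  have htail : (∑ k ∈ range N, (b k * cfQ α k : ℝ)) * α - ∑ k ∈ range N, (b k * cfP α k : ℝ) =
      (-1) ^ (m + 1) * ∑ k ∈ range (N - (m + 1)),
        (-1) ^ k * (b (m + 1 + k) * cfErr α (m + 1 + k)) := by
    simp only [sum_mul, ← sum_sub_distrib, hterm]
    rw [sum_range_eq_sum_range_add_of_eq_zero fun k hk => by simp [hb_low k hk], mul_sum]
    exact sum_congr rfl fun k _ => by ring
  obtain ⟨hlo, hhi⟩ := alternating_tail_mem_Ioo (a := fun k => cfA α k) (c := fun k => b k)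
    (cfErr_pos hα hirr) (cfErr_eq_cfA_mul_add hα hirr)
    (fun k => ⟨Nat.cast_nonneg _, Nat.cast_le.mpr (hb k)⟩) m (N - (m + 1))
  rw [htail, abs_mul, abs_pow, abs_neg, abs_one, one_pow, one_mul, abs_lt]
  exact ⟨by linarith [cfErr_succ_lt hα hirr m], hhi⟩

theorem stmt8_general (α : ℝ) (hα : α ∈ Set.Ioo (0:ℝ) 1) (hirr : Irrational α)
    (n : ℕ) (b : ℕ → ℕ) (hb : OstrowskiRep α n b)
    (L : ℕ) (hL0 : ∀ k, k < L → b k = 0)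
    (hLlow : 2 ≤ L ∨ (α < 1 / 2 ∧ 1 ≤ L)) :
    distNearInt ((n : ℝ) * α) < distNearInt ((cfQ α (L - 1) : ℝ) * α) := by
  obtain ⟨hb0, hbk, -, N, -, rfl⟩ := hb
  obtain ⟨m, rfl⟩ : ∃ m, L = m + 1 := Nat.exists_eq_add_one.mpr (by omega)
  have hdigits : ∀ k, b k ≤ cfA α (k + 1)
    | 0 => hb0.trans (Nat.sub_le _ _)
    | k + 1 => hbk (k + 1) k.succ_pos
  have hhalf : cfErr α m < 1 / 2 := by
    rcases hLlow with h | ⟨h, -⟩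
    · exact (cfErr_antitone hα hirr (by omega : 1 ≤ m)).trans_lt (cfErr_one_lt_half hα hirr)
    · exact (cfErr_antitone hα hirr m.zero_le).trans_lt ((cfErr_zero α).trans_lt h)
  calc distNearInt (((∑ k ∈ range (N + 1), b k * cfQ α k : ℕ) : ℝ) * α)
      ≤ |((∑ k ∈ range (N + 1), b k * cfQ α k : ℕ) : ℝ) * α -
          ((∑ k ∈ range (N + 1), b k * cfP α k : ℕ) : ℤ)| := distNearInt_le_abs_sub _ _
    _ < cfErr α m := by
      push_cast
      exact abs_sum_cfQ_mul_sub_sum_cfP_lt hα hirr hdigits hL0 (N + 1)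
    _ = distNearInt ((cfQ α (m + 1 - 1) : ℝ) * α) := (distNearInt_cfQ_mul hα hirr m hhalf).symm

theorem stmt8 (α : ℝ) (hα : α ∈ Set.Ioo (0:ℝ) 1) (hirr : Irrational α)
    (n : ℕ) (hn : 1 ≤ n) (b : ℕ → ℕ) (hb : OstrowskiRep α n b)
    (L : ℕ) (hL : b L ≠ 0) (hL0 : ∀ k, k < L → b k = 0)
    (hLlow : 2 ≤ L ∨ (α < 1 / 2 ∧ 1 ≤ L)) :
    distNearInt ((n : ℝ) * α) < distNearInt ((cfQ α (L - 1) : ℝ) * α) :=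
  stmt8_general α hα hirr n b hb L hL0 hLlow
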